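/- arXiv:1509.06383 — 4 statements merged into one kernel-verified Lean document; each statement's English description precedes it below -/
import Mathlib

section
/- Let μ > 0, α ∈ ℂ and j ∈ ℤ. Then ∫_{W'_μ} |F_{α,j}(z₁,z₂)|² dV < ∞ if and only if Re α > -1. -/
open MeasureTheory Real

noncomputable section

/-- The truncated worm domain `W'_μ`. -/
def wormT (μ : ℝ) : Set (ℂ × ℂ) :=
  {z : ℂ × ℂ | z.2 ≠ 0 ∧
    ‖z.1 - Complex.exp (Complex.I * (Real.log (‖z.2‖ ^ 2) : ℂ))‖ < 1 ∧
    |Real.log (‖z.2‖ ^ 2)| < μ}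

/-- `E_η(z) = (z₁ e^{-i log|z₂|²})^η e^{iη log|z₂|²}`, principal branch of the power. -/
def Efun (η : ℂ) (z : ℂ × ℂ) : ℂ :=
  (z.1 * Complex.exp (-Complex.I * (Real.log (‖z.2‖ ^ 2) : ℂ))) ^ η *
    Complex.exp (Complex.I * η * (Real.log (‖z.2‖ ^ 2) : ℂ))

/-- `F_{α,j}(z) = E_α(z) z₂^j`. -/
def Ffun (α : ℂ) (j : ℤ) (z : ℂ × ℂ) : ℂ := Efun α z * z.2 ^ j

end

/-!
On `W'_μ` the modulus `|F_{α,j}(z)|` equals `|z₁|^{Re α}` times the exponential of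
`-arg(z₁ e^{-i log|z₂|²}) Im α - Im α log|z₂|² + j log|z₂|`, which is bounded in terms of `μ`, so
`|F_{α,j}|²` is comparable to `|z₁|^{2 Re α}`. Over each `z₂` of the annulus `|log|z₂|²| < μ`
the `z₁`-fibre of `W'_μ` is a unit disc centred on the unit circle; rotating it onto
`|z₁ - 1| < 1` gives `∫_{W'_μ} |z₁|^s = vol(annulus) · ∫_{|z₁ - 1| < 1} |z₁|^s`. This last
integral is finite iff `s > -2`, because that holds for the discs `|z₁| < 2` and `|z₁| < 1`:
the first contains `|z₁ - 1| < 1`, the second is covered, away from `0`, by four rotated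
copies of it.
-/

open Set Metric

theorem setLIntegral_lt_top_iff_of_mul_le_of_le_mul {α : Type*} [MeasurableSpace α]
    {μ : Measure α} {s : Set α} (hs : MeasurableSet s)
    {f g : α → ENNReal} {c C : ENNReal} (hc : c ≠ 0) (hC : C ≠ ⊤)
    (hcf : ∀ x ∈ s, c * g x ≤ f x) (hfC : ∀ x ∈ s, f x ≤ C * g x) :
    ∫⁻ x in s, f x ∂μ < ⊤ ↔ ∫⁻ x in s, g x ∂μ < ⊤ := by
  constructor
  · intro hf
    have hcg : c * ∫⁻ x in s, g x ∂μ < ⊤ :=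
      ((lintegral_const_mul_le c g).trans (setLIntegral_mono' hs hcf)).trans_lt hf
    exact ENNReal.lt_top_of_mul_ne_top_right hcg.ne hc
  · intro hg
    calc ∫⁻ x in s, f x ∂μ ≤ ∫⁻ x in s, C * g x ∂μ := setLIntegral_mono' hs hfC
      _ = C * ∫⁻ x in s, g x ∂μ := lintegral_const_mul' C g hC
      _ < ⊤ := ENNReal.mul_lt_top hC.lt_top hg

theorem measure_norm_preimage_Ioo_pos {E : Type*} [NormedAddCommGroup E] [NormedSpace ℝ E]
    [Nontrivial E] [MeasurableSpace E] (μ : Measure E) [μ.IsOpenPosMeasure] {a b : ℝ}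
    (hab : a < b) (hb : 0 < b) : 0 < μ (norm ⁻¹' Ioo a b) := by
  have hmax : max a 0 < b := max_lt hab hb
  obtain ⟨x, hx⟩ := exists_norm_eq E (c := (max a 0 + b) / 2) (by positivity)
  refine (isOpen_Ioo.preimage continuous_norm).measure_pos μ ⟨x, ?_⟩
  rw [mem_preimage, hx, mem_Ioo]
  constructor <;> linarith [le_max_left a 0]

theorem measure_norm_preimage_Ioo_lt_top {E : Type*} [NormedAddCommGroup E] [ProperSpace E]
    [MeasurableSpace E] (μ : Measure E) [IsFiniteMeasureOnCompacts μ] (a b : ℝ) :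
    μ (norm ⁻¹' Ioo a b) < ⊤ :=
  (measure_mono fun _ hx ↦ mem_closedBall_zero_iff.2 (le_of_lt hx.2)).trans_lt
    (measure_closedBall_lt_top (x := (0 : E)) (r := b))

section NormRpow

variable {E : Type*} [NormedAddCommGroup E] [NormedSpace ℝ E] [FiniteDimensional ℝ E]
  [Nontrivial E] [MeasurableSpace E] [BorelSpace E] (μ : Measure E) [μ.IsAddHaarMeasure]

theorem integrableOn_ball_norm_rpow_iff {r : ℝ} (hr : 0 < r) (s : ℝ) :
    IntegrableOn (fun x : E ↦ ‖x‖ ^ s) (ball 0 r) μ ↔ -(Module.finrank ℝ E : ℝ) < s := by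
  rw [integrableOn_fun_norm_addHaar μ (f := fun y ↦ y ^ s)]
  have hpow : EqOn (fun y : ℝ ↦ y ^ (Module.finrank ℝ E - 1) • y ^ s)
      (fun y ↦ y ^ ((Module.finrank ℝ E : ℝ) - 1 + s)) (Ioo 0 r) := by
    intro y hy
    have hd : 1 ≤ Module.finrank ℝ E := Module.finrank_pos
    simp only [smul_eq_mul]
    rw [Real.rpow_add hy.1, ← Real.rpow_natCast, Nat.cast_sub hd, Nat.cast_one]
  rw [integrableOn_congr_fun hpow measurableSet_Ioo, intervalIntegral.integrableOn_Ioo_rpow_iff hr]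
  constructor <;> intro h <;> linarith

theorem lintegral_ball_norm_rpow_lt_top_iff {r : ℝ} (hr : 0 < r) (s : ℝ) :
    ∫⁻ x in ball 0 r, ENNReal.ofReal (‖x‖ ^ s) ∂μ < ⊤ ↔ -(Module.finrank ℝ E : ℝ) < s := by
  rw [← integrableOn_ball_norm_rpow_iff μ hr, IntegrableOn, Integrable,
    hasFiniteIntegral_iff_ofReal (.of_forall fun x ↦ by positivity)]
  exact ⟨fun h ↦ ⟨(measurable_norm.pow_const s).aestronglyMeasurable, h⟩, fun h ↦ h.2⟩

end NormRpow

theorem setLIntegral_ball_comp_norm_of_norm_eq_one {u : ℂ} (hu : ‖u‖ = 1) (r : ℝ)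
    (f : ℝ → ENNReal) :
    ∫⁻ z in ball u r, f ‖z‖ = ∫⁻ z in ball (1 : ℂ) r, f ‖z‖ := by
  let a : Circle := ⟨u, mem_sphere_zero_iff_norm.2 hu⟩
  have hball : rotation a ⁻¹' ball u r = ball 1 r := by
    have h1 : rotation a 1 = u := by rw [rotation_apply, mul_one]
    rw [← h1]
    exact (rotation a).isometry.preimage_ball 1 r
  rw [← hball, ← (rotation a).measurePreserving.setLIntegral_comp_preimage_emb
    (rotation a).toHomeomorph.measurableEmbedding]
  simp [Circle.norm_coe]

theorem ball_zero_one_subset_union_balls :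
    ball (0 : ℂ) 1 ⊆ {0} ∪ ball 1 1 ∪ ball (-1) 1 ∪ ball Complex.I 1 ∪ ball (-Complex.I) 1 := by
  intro z hz
  rcases eq_or_ne z 0 with rfl | hz0
  · simp
  have hpos : 0 < z.re ^ 2 + z.im ^ 2 := by
    simpa [Complex.normSq_apply, sq] using Complex.normSq_pos.2 hz0
  simp only [mem_union, mem_singleton_iff, hz0, false_or, mem_ball, Complex.dist_eq_re_im,
    Real.sqrt_lt' one_pos] at hz ⊢
  simp only [Complex.zero_re, Complex.zero_im, Complex.one_re, Complex.one_im, Complex.neg_re,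
    Complex.neg_im, Complex.I_re, Complex.I_im] at hz ⊢
  rcases le_total (z.im ^ 2) (z.re ^ 2) with h | h
  · rcases le_total 0 z.re with hre | hre
    · refine .inl (.inl (.inl ?_)); nlinarith
    · refine .inl (.inl (.inr ?_)); nlinarith
  · rcases le_total 0 z.im with him | him
    · refine .inl (.inr ?_); nlinarith
    · refine .inr ?_; nlinarith

theorem lintegral_ball_one_norm_rpow_lt_top_iff (s : ℝ) :
    ∫⁻ z in ball (1 : ℂ) 1, ENNReal.ofReal (‖z‖ ^ s) < ⊤ ↔ -2 < s := by
  have hdim : (Module.finrank ℝ ℂ : ℝ) = 2 := by simp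
  constructor
  · intro h
    have hball : ∀ u : ℂ, ‖u‖ = 1 → ∫⁻ z in ball u 1, ENNReal.ofReal (‖z‖ ^ s) < ⊤ :=
      fun u hu ↦ by rwa [setLIntegral_ball_comp_norm_of_norm_eq_one hu 1
        (fun x ↦ ENNReal.ofReal (x ^ s))]
    have hunit : ∫⁻ z in ball (0 : ℂ) 1, ENNReal.ofReal (‖z‖ ^ s) < ⊤ := by
      refine (lintegral_mono_set ball_zero_one_subset_union_balls).trans_lt ?_
      refine (lintegral_union_le _ _ _).trans_lt (ENNReal.add_lt_top.2 ⟨?_, hball _ (by simp)⟩)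
      refine (lintegral_union_le _ _ _).trans_lt (ENNReal.add_lt_top.2 ⟨?_, hball _ (by simp)⟩)
      refine (lintegral_union_le _ _ _).trans_lt (ENNReal.add_lt_top.2 ⟨?_, hball _ (by simp)⟩)
      refine (lintegral_union_le _ _ _).trans_lt (ENNReal.add_lt_top.2 ⟨?_, hball _ (by simp)⟩)
      simp
    simpa [hdim] using (lintegral_ball_norm_rpow_lt_top_iff volume one_pos s).1 hunit
  · intro hs
    have hsub : ball (1 : ℂ) 1 ⊆ ball 0 2 := by
      intro z hz
      rw [mem_ball, dist_zero_right]
      rw [mem_ball, dist_eq_norm] at hz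
      linarith [norm_le_norm_add_norm_sub' z 1, norm_one (α := ℂ)]
    refine (lintegral_mono_set hsub).trans_lt ?_
    rw [lintegral_ball_norm_rpow_lt_top_iff volume two_pos s, hdim]
    exact hs

theorem abs_log_sq_lt_iff {ρ : ℝ} (hρ : 0 < ρ) (μ : ℝ) :
    |log (ρ ^ 2)| < μ ↔ ρ ∈ Ioo (exp (-(μ / 2))) (exp (μ / 2)) := by
  rw [Real.log_pow, abs_lt, mem_Ioo, ← lt_log_iff_exp_lt hρ, ← log_lt_iff_lt_exp hρ]
  push_cast
  constructor <;> rintro ⟨h1, h2⟩ <;> constructor <;> linarith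

theorem mk_mem_wormT_iff {μ : ℝ} {v w : ℂ} :
    (v, w) ∈ wormT μ ↔ ‖w‖ ∈ Ioo (exp (-(μ / 2))) (exp (μ / 2)) ∧
      v ∈ ball (Complex.exp (Complex.I * (log (‖w‖ ^ 2) : ℂ))) 1 := by
  rw [mem_ball, dist_eq_norm]
  constructor
  · rintro ⟨hw, hball, hlog⟩
    exact ⟨(abs_log_sq_lt_iff (norm_pos_iff.2 hw) μ).1 hlog, hball⟩
  · rintro ⟨hnorm, hball⟩
    have hpos : 0 < ‖w‖ := (exp_pos _).trans hnorm.1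
    exact ⟨norm_pos_iff.1 hpos, hball, (abs_log_sq_lt_iff hpos μ).2 hnorm⟩

theorem measurableSet_wormT (μ : ℝ) : MeasurableSet (wormT μ) := by
  have : wormT μ = {z : ℂ × ℂ | ‖z.2‖ ∈ Ioo (exp (-(μ / 2))) (exp (μ / 2))} ∩
      {z | dist z.1 (Complex.exp (Complex.I * (log (‖z.2‖ ^ 2) : ℂ))) < 1} := by
    ext ⟨v, w⟩; exact mk_mem_wormT_iff
  rw [this]
  exact (measurableSet_Ioo.preimage (by fun_prop)).inter (measurableSet_lt (by fun_prop) (by fun_prop))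

theorem setLIntegral_wormT_comp_norm_fst (μ : ℝ) {f : ℝ → ENNReal} (hf : Measurable f) :
    ∫⁻ z in wormT μ, f ‖z.1‖ =
      volume (norm ⁻¹' Ioo (exp (-(μ / 2))) (exp (μ / 2)) : Set ℂ) *
        ∫⁻ z in ball (1 : ℂ) 1, f ‖z‖ := by
  set A : Set ℂ := norm ⁻¹' Ioo (exp (-(μ / 2))) (exp (μ / 2))
  have hA : MeasurableSet A := measurableSet_Ioo.preimage measurable_norm
  have hfiber : ∀ w : ℂ, ∫⁻ v, (wormT μ).indicator (fun z ↦ f ‖z.1‖) (v, w) =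
      A.indicator (fun _ ↦ ∫⁻ z in ball (1 : ℂ) 1, f ‖z‖) w := by
    intro w
    by_cases hw : w ∈ A
    · have hc : ‖Complex.exp (Complex.I * (log (‖w‖ ^ 2) : ℂ))‖ = 1 := by
        rw [mul_comm]; exact Complex.norm_exp_ofReal_mul_I _
      rw [indicator_of_mem hw, ← setLIntegral_ball_comp_norm_of_norm_eq_one hc,
        ← lintegral_indicator measurableSet_ball]
      congr 1; ext v
      by_cases hv : v ∈ ball (Complex.exp (Complex.I * (log (‖w‖ ^ 2) : ℂ))) 1
      · rw [indicator_of_mem (mk_mem_wormT_iff.2 ⟨hw, hv⟩), indicator_of_mem hv]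
      · rw [indicator_of_notMem (fun h ↦ hv (mk_mem_wormT_iff.1 h).2), indicator_of_notMem hv]
    · rw [indicator_of_notMem hw]
      simp_rw [indicator_of_notMem (fun h ↦ hw (mk_mem_wormT_iff.1 h).1), lintegral_zero]
  have hmeas : Measurable ((wormT μ).indicator fun z : ℂ × ℂ ↦ f ‖z.1‖) :=
    (hf.comp measurable_fst.norm).indicator (measurableSet_wormT μ)
  rw [← lintegral_indicator (measurableSet_wormT μ), Measure.volume_eq_prod,
    lintegral_prod_symm _ hmeas.aemeasurable]
  simp_rw [hfiber]
  rw [lintegral_indicator_const hA, mul_comm]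

theorem exists_norm_Ffun_eq {μ : ℝ} (α : ℂ) (j : ℤ) {z : ℂ × ℂ} (hz : z ∈ wormT μ) :
    ∃ B, |B| ≤ (π + μ) * |α.im| + μ * |(j : ℝ)| / 2 ∧
      ‖Ffun α j z‖ = ‖z.1‖ ^ α.re * exp B := by
  obtain ⟨hw, hv, ht⟩ := hz
  set t := log (‖z.2‖ ^ 2)
  set b := z.1 * Complex.exp (-Complex.I * t)
  have hrot : ‖Complex.exp (-Complex.I * t)‖ = 1 := by
    rw [Complex.norm_exp]; simp
  have hb1 : ‖b - 1‖ < 1 := by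
    have : b - 1 = (z.1 - Complex.exp (Complex.I * t)) * Complex.exp (-Complex.I * t) := by
      rw [sub_mul, ← Complex.exp_add]; simp [b]
    rwa [this, norm_mul, hrot, mul_one]
  have hb0 : b ≠ 0 := by
    rintro hb; simp [hb] at hb1
  have hnorm_b : ‖b‖ = ‖z.1‖ := by rw [norm_mul, hrot, mul_one]
  have hnorm_w : ‖z.2 ^ j‖ = exp (j * (t / 2)) := by
    rw [norm_zpow, ← rpow_intCast, rpow_def_of_pos (norm_pos_iff.2 hw)]
    simp only [t, Real.log_pow]
    push_cast
    ring_nf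
  have hnorm_exp : ‖Complex.exp (Complex.I * α * t)‖ = exp (-(α.im * t)) := by
    rw [Complex.norm_exp]; simp
  refine ⟨-(b.arg * α.im) - α.im * t + j * (t / 2), ?_, ?_⟩
  · have harg : |b.arg * α.im| ≤ π * |α.im| := by
      rw [abs_mul]; exact mul_le_mul_of_nonneg_right (Complex.abs_arg_le_pi b) (abs_nonneg _)
    have hphase : |α.im * t| ≤ μ * |α.im| := by
      rw [abs_mul, mul_comm]; exact mul_le_mul_of_nonneg_right ht.le (abs_nonneg _)
    have hj : |j * (t / 2)| ≤ μ * |(j : ℝ)| / 2 := by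
      rw [abs_mul, abs_div, abs_two]; nlinarith [abs_nonneg (j : ℝ)]
    calc _ ≤ |b.arg * α.im| + |α.im * t| + |j * (t / 2)| := by
          grind [abs_add_le, abs_sub_le, abs_neg]
      _ ≤ _ := by linarith
  · rw [Ffun, Efun, norm_mul, norm_mul, Complex.norm_cpow_of_ne_zero hb0, hnorm_b, hnorm_exp,
      hnorm_w, exp_add, exp_sub, exp_neg]
    field_simp
    rw [mul_assoc, ← exp_add, add_neg_cancel, exp_zero, mul_one]

theorem nnnorm_Ffun_sq_mem_Icc {μ : ℝ} (α : ℂ) (j : ℤ) {z : ℂ × ℂ} (hz : z ∈ wormT μ) :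
    (‖Ffun α j z‖₊ : ENNReal) ^ 2 ∈
      Icc (ENNReal.ofReal (exp (-(2 * (π + μ) * |α.im| + μ * |(j : ℝ)|))) *
          ENNReal.ofReal (‖z.1‖ ^ (2 * α.re)))
        (ENNReal.ofReal (exp (2 * (π + μ) * |α.im| + μ * |(j : ℝ)|)) *
          ENNReal.ofReal (‖z.1‖ ^ (2 * α.re))) := by
  obtain ⟨B, hB, hnorm⟩ := exists_norm_Ffun_eq α j hz
  have hsq : (‖Ffun α j z‖₊ : ENNReal) ^ 2 =
      ENNReal.ofReal (exp (2 * B)) * ENNReal.ofReal (‖z.1‖ ^ (2 * α.re)) := by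
    rw [← enorm_eq_nnnorm, ← ofReal_norm, ← ENNReal.ofReal_pow (norm_nonneg _),
      ← ENNReal.ofReal_mul (exp_pos _).le, hnorm, mul_comm 2 α.re, rpow_mul (norm_nonneg _),
      rpow_two, two_mul, exp_add]
    ring_nf
  rw [hsq, abs_le] at *
  constructor <;> gcongr <;> linarith [hB.1, hB.2]

theorem Ffun_memL2_iff (μ : ℝ) (hμ : 0 < μ) (α : ℂ) (j : ℤ) :
    (∫⁻ z in wormT μ, (‖Ffun α j z‖₊ : ENNReal) ^ 2) < ⊤ ↔ -1 < α.re := by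
  have hcmp := fun z (hz : z ∈ wormT μ) ↦ nnnorm_Ffun_sq_mem_Icc α j hz
  rw [setLIntegral_lt_top_iff_of_mul_le_of_le_mul (measurableSet_wormT μ) (by simp [exp_pos])
    ENNReal.ofReal_ne_top (fun z hz ↦ (hcmp z hz).1) (fun z hz ↦ (hcmp z hz).2),
    setLIntegral_wormT_comp_norm_fst μ (f := fun ρ ↦ ENNReal.ofReal (ρ ^ (2 * α.re)))
      (by fun_prop)]
  have hpos := measure_norm_preimage_Ioo_pos (volume : Measure ℂ)
    (exp_lt_exp.2 (by linarith : -(μ / 2) < μ / 2)) (exp_pos (μ / 2))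
  have hfin := measure_norm_preimage_Ioo_lt_top (volume : Measure ℂ) (exp (-(μ / 2))) (exp (μ / 2))
  rw [show -1 < α.re ↔ -2 < 2 * α.re by constructor <;> intro h <;> linarith,
    ← lintegral_ball_one_norm_rpow_lt_top_iff]
  simp [lt_top_iff_ne_top, ENNReal.mul_eq_top, hpos.ne', hfin.ne]
end

section
/- Let μ > 0, let j, j' ∈ ℤ with j ≠ j', and let α, β ∈ ℂ with Re α > -1 and Re β > -1. Then ∫_{W'_μ} F_{α,j}(z) · conj(F_{β,j'}(z)) dV(z) = 0; that is, functions with different Fourier indices in the second variable are orthogonal in the Bergman space of W'_μ. -/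
open MeasureTheory Real

/-!
Rotating `z₂` by a unimodular `c` preserves Lebesgue measure and `W'_μ`, and since `E_η` depends
on `z₂` only through `|z₂|`, it multiplies the integrand `F_{α,j} · conj F_{β,j'}` by
`c^j · conj c^{j'} = c^{j-j'}`. The integral `I` therefore satisfies `I = c^{j-j'} I`, and any `c`
with `c^{j-j'} ≠ 1` forces `I = 0`.
-/

section

variable {α E 𝕜 : Type*} [MeasurableSpace α] {μ : Measure α} [NormedAddCommGroup E]
  [NormedSpace ℝ E] [NontriviallyNormedField 𝕜] [NormedSpace 𝕜 E] [SMulCommClass ℝ 𝕜 E]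

theorem MeasureTheory.MeasurePreserving.setIntegral_eq_zero_of_comp_eq_smul {T : α → α}
    (hT : MeasurePreserving T μ μ) (hTe : MeasurableEmbedding T) {s : Set α}
    (hs : T ⁻¹' s = s) {f : α → E} {c : 𝕜} (hc : c ≠ 1) (hf : ∀ x, f (T x) = c • f x) :
    ∫ x in s, f x ∂μ = 0 := by
  have hfix : ∫ x in s, f x ∂μ = c • ∫ x in s, f x ∂μ :=
    calc ∫ x in s, f x ∂μ = ∫ x in T ⁻¹' s, f (T x) ∂μ :=
          (hT.setIntegral_preimage_emb hTe f s).symm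
      _ = c • ∫ x in s, f x ∂μ := by simp only [hs, hf, integral_smul]
  have hzero : (1 - c) • ∫ x in s, f x ∂μ = 0 := by
    rw [sub_smul, one_smul, ← hfix, sub_self]
  exact (smul_eq_zero.mp hzero).resolve_left (sub_ne_zero.mpr hc.symm)

end

theorem Circle.exists_zpow_ne_one {n : ℤ} (hn : n ≠ 0) : ∃ c : Circle, c ^ n ≠ 1 :=
  ⟨Circle.exp (π / n), by
    rw [← Circle.exp_intCast_mul, mul_div_cancel₀ _ (Int.cast_ne_zero.mpr hn)]
    exact Circle.exp_pi_ne_one⟩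

def rotateSnd (c : Circle) (z : ℂ × ℂ) : ℂ × ℂ := (z.1, c * z.2)

section

variable (c : Circle)

theorem rotateSnd_fst (z : ℂ × ℂ) : (rotateSnd c z).1 = z.1 := rfl

theorem rotateSnd_snd (z : ℂ × ℂ) : (rotateSnd c z).2 = c * z.2 := rfl

theorem norm_rotateSnd_snd (z : ℂ × ℂ) : ‖(rotateSnd c z).2‖ = ‖z.2‖ := by
  rw [rotateSnd_snd, norm_mul, Circle.norm_coe, one_mul]

theorem measurePreserving_rotateSnd : MeasurePreserving (rotateSnd c) := by
  have h := (MeasurePreserving.id (volume : Measure ℂ)).prod (rotation c).measurePreserving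
  rwa [← Measure.volume_eq_prod] at h

theorem measurableEmbedding_rotateSnd : MeasurableEmbedding (rotateSnd c) :=
  MeasurableEmbedding.id.prodMap (rotation c).toHomeomorph.measurableEmbedding

theorem preimage_rotateSnd_wormT (μ : ℝ) : rotateSnd c ⁻¹' wormT μ = wormT μ := by
  ext z
  simp only [wormT, Set.mem_preimage, Set.mem_ofPred_eq, rotateSnd_fst, rotateSnd_snd,
    norm_mul, Circle.norm_coe, one_mul, mul_ne_zero_iff, Circle.coe_ne_zero, ne_eq, not_false_eq_true, true_and]

theorem Efun_rotateSnd (η : ℂ) (z : ℂ × ℂ) : Efun η (rotateSnd c z) = Efun η z := by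
  simp only [Efun, rotateSnd_fst, norm_rotateSnd_snd]

theorem Ffun_rotateSnd (α : ℂ) (j : ℤ) (z : ℂ × ℂ) :
    Ffun α j (rotateSnd c z) = (c : ℂ) ^ j * Ffun α j z := by
  rw [Ffun, Ffun, Efun_rotateSnd, rotateSnd_snd, mul_zpow]
  ring

theorem Ffun_mul_conj_Ffun_rotateSnd (α β : ℂ) (j j' : ℤ) (z : ℂ × ℂ) :
    Ffun α j (rotateSnd c z) * starRingEnd ℂ (Ffun β j' (rotateSnd c z)) =
      ((c ^ (j - j') : Circle) : ℂ) * (Ffun α j z * starRingEnd ℂ (Ffun β j' z)) := by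
  rw [Ffun_rotateSnd, Ffun_rotateSnd, map_mul, map_zpow₀, ← Circle.coe_inv_eq_conj,
    Circle.coe_zpow, zpow_sub₀ (Circle.coe_ne_zero c), Circle.coe_inv, inv_zpow, div_eq_mul_inv]
  ring

end

theorem inner_Ffun_Ffun_ne_index_eq_zero_general (μ : ℝ) (j j' : ℤ) (hjj' : j ≠ j')
    (α β : ℂ) :
    ∫ z in wormT μ, Ffun α j z * (starRingEnd ℂ) (Ffun β j' z) = 0 := by
  obtain ⟨c, hc⟩ := Circle.exists_zpow_ne_one (sub_ne_zero.mpr hjj')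
  have hc' : ((c ^ (j - j') : Circle) : ℂ) ≠ 1 := by rwa [Ne, Circle.coe_eq_one]
  exact (measurePreserving_rotateSnd c).setIntegral_eq_zero_of_comp_eq_smul
    (measurableEmbedding_rotateSnd c) (preimage_rotateSnd_wormT c μ) hc'
    (Ffun_mul_conj_Ffun_rotateSnd c α β j j')

theorem inner_Ffun_Ffun_ne_index_eq_zero (μ : ℝ) (hμ : 0 < μ) (j j' : ℤ) (hjj' : j ≠ j')
    (α β : ℂ) (hα : -1 < α.re) (hβ : -1 < β.re) :
    ∫ z in wormT μ, Ffun α j z * (starRingEnd ℂ) (Ffun β j' z) = 0 :=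
  inner_Ffun_Ffun_ne_index_eq_zero_general μ j j' hjj' α β
end

section
/- Let μ > 0 and c₀ > -1. Each of the two sets {H_{2k,j} : j ∈ ℤ, k = 0,1,2,…} and {H_{2k+1,j} : j ∈ ℤ, k = 0,1,2,…} is an orthogonal system in the Bergman space of W'_μ: for all k, k' ≥ 0 and j, j' ∈ ℤ with (k,j) ≠ (k',j'), one has ∫_{W'_μ} H_{2k,j}(z) · conj(H_{2k',j'}(z)) dV(z) = 0 and ∫_{W'_μ} H_{2k+1,j}(z) · conj(H_{2k'+1,j'}(z)) dV(z) = 0. -/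
open MeasureTheory Real

noncomputable section

/-- `H_{ℓ,j}(z) = E_{c₀ + νℓ + i(j+1)/2}(z) z₂^j`, where `ν = π/(2μ)`. -/
def Hfun (μ c₀ : ℝ) (ℓ : ℕ) (j : ℤ) (z : ℂ × ℂ) : ℂ :=
  Efun ((c₀ : ℂ) + ((π / (2 * μ) : ℝ) : ℂ) * (ℓ : ℂ) + Complex.I * ((j : ℂ) + 1) / 2) z *
    z.2 ^ j

end

/-
The integrals vanish by symmetry. The real-linear maps `(z₁, z₂) ↦ (e^{is} z₁, e^{s/2 + iα} z₂)`
preserve the disc condition, shift `log |z₂|²` by `s` and have Jacobian `e^s`; together with the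
Jacobian, `H_{ℓ,j} · conj H_{ℓ',j'}` picks up exactly the phase `e^{i(sν(ℓ-ℓ') + α(j-j'))}`.
For `j ≠ j'` the rotation `s = 0`, `α = π/(j-j')` maps `W'_μ` onto itself with phase `-1`.
For `j = j'` and `ℓ - ℓ' = 2m ≠ 0`, cut `W'_μ` at `log |z₂|² = μ - c` with `c = μ/|m|`: the shift by
`c` moves the lower piece to the top of `W'_μ` and the shift by `c - 2μ` moves the upper piece to
the bottom, both with phase `-1`, so the integral equals its own negative. Splitting the integral
needs integrability, but a non-integrable integrand has integral `0` anyway.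
-/

noncomputable section

namespace WormDomain

open Complex ComplexConjugate Set

def logNormSq (z : ℂ × ℂ) : ℝ := Real.log (‖z.2‖ ^ 2)

def slab (p q : ℝ) : Set (ℂ × ℂ) :=
  {z | z.2 ≠ 0 ∧ ‖z.1 - exp (I * logNormSq z)‖ < 1 ∧ logNormSq z ∈ Ioo p q}

theorem wormT_eq_slab (μ : ℝ) : wormT μ = slab (-μ) μ := by
  ext z
  simp only [wormT, slab, logNormSq, mem_ofPred_eq, mem_Ioo, abs_lt]

theorem continuousOn_logNormSq : ContinuousOn logNormSq {z | z.2 ≠ 0} := fun z hz =>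
  ((continuous_snd.norm.pow 2).continuousAt.log (by simpa using hz)).continuousWithinAt

theorem isOpen_slab (p q : ℝ) : IsOpen (slab p q) := by
  have hcont : ContinuousOn (fun z : ℂ × ℂ => (‖z.1 - exp (I * logNormSq z)‖, logNormSq z))
      {z | z.2 ≠ 0} :=
    ((continuousOn_fst.sub (continuous_exp.comp_continuousOn (continuousOn_const.mul
      (continuous_ofReal.comp_continuousOn continuousOn_logNormSq)))).norm).prodMk
      continuousOn_logNormSq
  exact hcont.isOpen_inter_preimage (isOpen_ne.preimage continuous_snd)
    (isOpen_Iio.prod isOpen_Ioo)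

theorem measurableSet_slab (p q : ℝ) : MeasurableSet (slab p q) :=
  (isOpen_slab p q).measurableSet

theorem volume_logNormSq_eq (v : ℝ) : volume {z : ℂ × ℂ | z.2 ≠ 0 ∧ logNormSq z = v} = 0 := by
  refine measure_mono_null (t := univ ×ˢ Metric.sphere 0 (Real.exp (v / 2))) ?_ ?_
  · rintro z ⟨hz, hv⟩
    have hlog : Real.log ‖z.2‖ = v / 2 := by
      rw [logNormSq, Real.log_pow] at hv
      push_cast at hv
      linarith
    simp [← hlog, Real.exp_log (norm_pos_iff.2 hz)]
  · rw [Measure.volume_eq_prod, Measure.prod_prod, Measure.addHaar_sphere, mul_zero]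

theorem slab_subset_slab {p q p' q' : ℝ} (hp : p' ≤ p) (hq : q ≤ q') :
    slab p q ⊆ slab p' q' := fun _ ⟨h0, h1, h2⟩ => ⟨h0, h1, hp.trans_lt h2.1, h2.2.trans_le hq⟩

theorem slab_union_ae_eq {p v q : ℝ} (hpv : p ≤ v) (hvq : v ≤ q) :
    (slab p v ∪ slab v q : Set (ℂ × ℂ)) =ᵐ[volume] slab p q := by
  have hsub : slab p v ∪ slab v q ⊆ slab p q :=
    union_subset (slab_subset_slab le_rfl hvq) (slab_subset_slab hpv le_rfl)
  refine hsub.eventuallyLE.antisymm (ae_le_set.2 (measure_mono_null ?_ (volume_logNormSq_eq v)))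
  rintro z ⟨⟨h0, h1, h2⟩, hz⟩
  simp only [mem_union, not_or] at hz
  refine ⟨h0, le_antisymm ?_ ?_⟩
  · exact not_lt.1 fun h => hz.2 ⟨h0, h1, h, h2.2⟩
  · exact not_lt.1 fun h => hz.1 ⟨h0, h1, h2.1, h⟩

theorem setIntegral_slab_split {E : Type*} [NormedAddCommGroup E] [NormedSpace ℝ E]
    {f : ℂ × ℂ → E} {p v q : ℝ} (hf : IntegrableOn f (slab p q)) (hpv : p ≤ v) (hvq : v ≤ q) :
    ∫ z in slab p q, f z = (∫ z in slab p v, f z) + ∫ z in slab v q, f z := by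
  have hdisj : Disjoint (slab p v) (slab v q) :=
    disjoint_left.2 fun _ h h' => lt_asymm h.2.2.2 h'.2.2.1
  rw [← setIntegral_union hdisj (measurableSet_slab v q)
    (hf.mono_set (slab_subset_slab le_rfl hvq)) (hf.mono_set (slab_subset_slab hpv le_rfl)),
    setIntegral_congr_set (slab_union_ae_eq hpv hvq)]

def diagMul (a b : ℂ) : ℂ × ℂ →L[ℝ] ℂ × ℂ :=
  ((a • ContinuousLinearMap.id ℂ ℂ).prodMap (b • ContinuousLinearMap.id ℂ ℂ)).restrictScalars ℝ

@[simp] theorem diagMul_apply (a b : ℂ) (z : ℂ × ℂ) : diagMul a b z = (a * z.1, b * z.2) := rfl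

theorem det_diagMul (a b : ℂ) : (diagMul a b).det = normSq (a * b) := by
  rw [ContinuousLinearMap.det, diagMul, ContinuousLinearMap.coe_restrictScalars,
    LinearMap.det_restrictScalars, Algebra.norm_complex_apply]
  simp [LinearMap.det_prodMap]

def wormMap (s α : ℝ) : ℂ × ℂ →L[ℝ] ℂ × ℂ := diagMul (exp (s * I)) (exp (s / 2 + α * I))

theorem norm_exp_half_add_mul_I_sq (s α : ℝ) : ‖exp (s / 2 + α * I)‖ ^ 2 = Real.exp s := by
  rw [norm_exp, ← Real.exp_nat_mul]
  congr 1
  simp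
  ring

theorem det_wormMap (s α : ℝ) : (wormMap s α).det = Real.exp s := by
  rw [wormMap, det_diagMul, normSq_eq_norm_sq, norm_mul, mul_pow, norm_exp_ofReal_mul_I, one_pow,
    one_mul, norm_exp_half_add_mul_I_sq]

theorem logNormSq_wormMap (s α : ℝ) {z : ℂ × ℂ} (hz : z.2 ≠ 0) :
    logNormSq (wormMap s α z) = s + logNormSq z := by
  rw [logNormSq, logNormSq, wormMap, diagMul_apply, norm_mul, mul_pow, norm_exp_half_add_mul_I_sq,
    Real.log_mul (Real.exp_pos s).ne' (by positivity), Real.log_exp]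

theorem wormMap_snd_ne_zero_iff (s α : ℝ) (z : ℂ × ℂ) : (wormMap s α z).2 ≠ 0 ↔ z.2 ≠ 0 := by
  simp [wormMap, Complex.exp_ne_zero]

theorem norm_sub_exp_wormMap (s α : ℝ) {z : ℂ × ℂ} (hz : z.2 ≠ 0) :
    ‖(wormMap s α z).1 - exp (I * logNormSq (wormMap s α z))‖ =
      ‖z.1 - exp (I * logNormSq z)‖ := by
  rw [logNormSq_wormMap s α hz, ofReal_add, mul_add, Complex.exp_add, mul_comm I (s : ℂ)]
  simp only [wormMap, diagMul_apply]
  rw [← mul_sub, norm_mul, norm_exp_ofReal_mul_I, one_mul]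

theorem wormMap_mem_slab_iff (s α p q : ℝ) (z : ℂ × ℂ) :
    wormMap s α z ∈ slab (p + s) (q + s) ↔ z ∈ slab p q := by
  by_cases hz : z.2 = 0
  · simp [slab, hz, wormMap]
  simp only [slab, mem_ofPred_eq, mem_Ioo, wormMap_snd_ne_zero_iff]
  rw [norm_sub_exp_wormMap s α hz, logNormSq_wormMap s α hz]
  constructor <;> rintro ⟨h0, h1, h2, h3⟩ <;> exact ⟨h0, h1, by linarith, by linarith⟩

theorem wormMap_neg_wormMap (s α : ℝ) (z : ℂ × ℂ) : wormMap (-s) (-α) (wormMap s α z) = z := by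
  simp only [wormMap, diagMul_apply, ← mul_assoc, ← Complex.exp_add]
  ext <;> push_cast <;> ring_nf <;> simp

theorem image_wormMap_slab (s α p q : ℝ) : wormMap s α '' slab p q = slab (p + s) (q + s) := by
  have hright (w : ℂ × ℂ) : wormMap s α (wormMap (-s) (-α) w) = w := by
    simpa using wormMap_neg_wormMap (-s) (-α) w
  rw [image_eq_preimage_of_inverse (wormMap_neg_wormMap s α) hright]
  ext w
  rw [mem_preimage, ← wormMap_mem_slab_iff s α, hright]

theorem setIntegral_slab_add {E : Type*} [NormedAddCommGroup E] [NormedSpace ℝ E]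
    (f : ℂ × ℂ → E) (s α p q : ℝ) :
    ∫ z in slab (p + s) (q + s), f z = Real.exp s • ∫ z in slab p q, f (wormMap s α z) := by
  have : (volume : Measure (ℂ × ℂ)).IsAddHaarMeasure := Measure.prod.instIsAddHaarMeasure _ _
  rw [← image_wormMap_slab s α, integral_image_eq_integral_abs_det_fderiv_smul volume
    (measurableSet_slab p q) (fun z _ => (wormMap s α).hasFDerivAt.hasFDerivWithinAt)
    (Function.LeftInverse.injective (wormMap_neg_wormMap s α)).injOn, det_wormMap,
    abs_of_pos (Real.exp_pos s), integral_smul]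

theorem Efun_wormMap (η : ℂ) (s α : ℝ) {z : ℂ × ℂ} (hz : z.2 ≠ 0) :
    Efun η (wormMap s α z) = exp (I * η * s) * Efun η z := by
  change (_ * exp (-I * logNormSq _)) ^ η * exp (I * η * logNormSq _) =
    _ * ((z.1 * exp (-I * logNormSq z)) ^ η * exp (I * η * logNormSq z))
  have hbase : (wormMap s α z).1 * exp (-I * logNormSq (wormMap s α z)) =
      z.1 * exp (-I * logNormSq z) := by
    rw [logNormSq_wormMap s α hz]
    simp only [wormMap, diagMul_apply]
    rw [mul_comm _ z.1, mul_assoc, ← Complex.exp_add]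
    push_cast
    ring_nf
  rw [hbase, logNormSq_wormMap s α hz, ofReal_add, mul_add, Complex.exp_add]
  ring

theorem Hfun_wormMap (μ c₀ : ℝ) (ℓ : ℕ) (j : ℤ) (s α : ℝ) {z : ℂ × ℂ} (hz : z.2 ≠ 0) :
    Hfun μ c₀ ℓ j (wormMap s α z) =
      exp (I * (c₀ + (π / (2 * μ) : ℝ) * ℓ + I * (j + 1) / 2) * s + j * (s / 2 + α * I)) *
        Hfun μ c₀ ℓ j z := by
  rw [Hfun, Hfun, Efun_wormMap _ s α hz, Complex.exp_add, Complex.exp_int_mul]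
  simp only [wormMap, diagMul_apply]
  rw [mul_zpow]
  ring

theorem Hfun_mul_conj_wormMap (μ c₀ : ℝ) (ℓ ℓ' : ℕ) (j j' : ℤ) (s α : ℝ) {z : ℂ × ℂ}
    (hz : z.2 ≠ 0) :
    (Real.exp s : ℂ) * (Hfun μ c₀ ℓ j (wormMap s α z) * conj (Hfun μ c₀ ℓ' j' (wormMap s α z))) =
      exp (((s * (π / (2 * μ)) * (ℓ - ℓ') + α * (j - j') : ℝ)) * I) *
        (Hfun μ c₀ ℓ j z * conj (Hfun μ c₀ ℓ' j' z)) := by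
  rw [Hfun_wormMap μ c₀ ℓ j s α hz, Hfun_wormMap μ c₀ ℓ' j' s α hz, map_mul, ← exp_conj,
    ofReal_exp]
  rw [show ∀ a b c x y : ℂ, exp a * (exp b * x * (exp c * y)) = exp (a + b + c) * (x * y) by
    intros; rw [Complex.exp_add, Complex.exp_add]; ring]
  congr 2
  simp only [map_add, map_mul, map_div₀, conj_I, conj_ofReal, map_intCast, map_natCast, map_one,
    map_ofNat]
  push_cast
  linear_combination (s * (j + j' + 2) / 2 : ℂ) * I_sq

theorem setIntegral_slab_add_Hfun_mul_conj (μ c₀ : ℝ) (ℓ ℓ' : ℕ) (j j' : ℤ) (s α p q : ℝ) :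
    ∫ z in slab (p + s) (q + s), Hfun μ c₀ ℓ j z * conj (Hfun μ c₀ ℓ' j' z) =
      exp (((s * (π / (2 * μ)) * (ℓ - ℓ') + α * (j - j') : ℝ)) * I) *
        ∫ z in slab p q, Hfun μ c₀ ℓ j z * conj (Hfun μ c₀ ℓ' j' z) := by
  rw [setIntegral_slab_add _ s α, Complex.real_smul, ← integral_const_mul, ← integral_const_mul]
  exact setIntegral_congr_fun (measurableSet_slab p q) fun z hz =>
    Hfun_mul_conj_wormMap μ c₀ ℓ ℓ' j j' s α hz.1

theorem exp_odd_mul_pi_mul_I (k : ℤ) : exp ((π + k * (2 * π) : ℝ) * I) = -1 := by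
  push_cast
  rw [add_mul, Complex.exp_add, exp_pi_mul_I, mul_assoc, exp_int_mul_two_pi_mul_I, mul_one]

theorem exists_pi_mul_div_abs_eq {m : ℤ} (hm : m ≠ 0) :
    ∃ k : ℤ, π * m / |(m : ℝ)| = π + k * (2 * π) := by
  rcases hm.lt_or_gt with hneg | hpos
  · refine ⟨-1, ?_⟩
    rw [abs_of_neg (Int.cast_lt_zero.2 hneg)]
    field_simp
    ring
  · refine ⟨0, ?_⟩
    rw [abs_of_pos (Int.cast_pos.2 hpos)]
    field_simp
    ring

theorem integral_Hfun_mul_conj_eq_zero_of_ne (μ c₀ : ℝ) (ℓ ℓ' : ℕ) {j j' : ℤ} (hj : j ≠ j') :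
    ∫ z in wormT μ, Hfun μ c₀ ℓ j z * conj (Hfun μ c₀ ℓ' j' z) = 0 := by
  have hj : (j : ℝ) - j' ≠ 0 := sub_ne_zero.2 (Int.cast_injective.ne hj)
  have h := setIntegral_slab_add_Hfun_mul_conj μ c₀ ℓ ℓ' j j' 0 (π / (j - j')) (-μ) μ
  rw [add_zero, add_zero, zero_mul, zero_mul, zero_add, div_mul_cancel₀ _ hj,
    exp_pi_mul_I, neg_one_mul, ← wormT_eq_slab] at h
  exact CharZero.eq_neg_self_iff.1 h

theorem setIntegral_slab_eq_mul_self {E : Type*} [NormedAddCommGroup E] [NormedSpace ℂ E]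
    {f : ℂ × ℂ → E} {a b c : ℝ} (κ : ℂ) (hf : IntegrableOn f (slab a b)) (hc : 0 ≤ c)
    (hcb : c ≤ b - a) (h₁ : ∫ z in slab (a + c) b, f z = κ • ∫ z in slab a (b - c), f z)
    (h₂ : ∫ z in slab a (a + c), f z = κ • ∫ z in slab (b - c) b, f z) :
    ∫ z in slab a b, f z = κ • ∫ z in slab a b, f z := by
  calc ∫ z in slab a b, f z = (∫ z in slab a (a + c), f z) + ∫ z in slab (a + c) b, f z :=
        setIntegral_slab_split hf (by linarith) (by linarith)
    _ = κ • ((∫ z in slab a (b - c), f z) + ∫ z in slab (b - c) b, f z) := by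
        rw [h₁, h₂, smul_add, add_comm]
    _ = κ • ∫ z in slab a b, f z := by
        rw [← setIntegral_slab_split hf (by linarith) (by linarith)]

theorem integral_Hfun_mul_conj_eq_zero_of_sub_eq {μ : ℝ} (hμ : 0 < μ) (c₀ : ℝ) {ℓ ℓ' : ℕ}
    (j : ℤ) {m : ℤ} (hm : m ≠ 0) (hℓ : (ℓ : ℝ) - ℓ' = 2 * m) :
    ∫ z in wormT μ, Hfun μ c₀ ℓ j z * conj (Hfun μ c₀ ℓ' j z) = 0 := by
  rw [wormT_eq_slab]
  by_cases hF : IntegrableOn (fun z => Hfun μ c₀ ℓ j z * conj (Hfun μ c₀ ℓ' j z)) (slab (-μ) μ)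
  swap
  · exact integral_undef hF
  have hshift (s p q : ℝ) (k : ℤ) (hk : s * π * m / μ = π + k * (2 * π)) :
      ∫ z in slab (p + s) (q + s), Hfun μ c₀ ℓ j z * conj (Hfun μ c₀ ℓ' j z) =
        (-1 : ℂ) • ∫ z in slab p q, Hfun μ c₀ ℓ j z * conj (Hfun μ c₀ ℓ' j z) := by
    rw [setIntegral_slab_add_Hfun_mul_conj, ← exp_odd_mul_pi_mul_I k, ← hk, hℓ, smul_eq_mul]
    congr 4
    field_simp
    ring
  have hm1 : 1 ≤ |(m : ℝ)| := by exact_mod_cast Int.one_le_abs hm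
  obtain ⟨k, hk⟩ := exists_pi_mul_div_abs_eq hm
  set c := μ / |(m : ℝ)| with hc
  replace hk : c * π * m / μ = π + k * (2 * π) := by
    rw [← hk, hc]
    field_simp
  have h := setIntegral_slab_eq_mul_self (c := c) (-1) hF (by positivity)
    (by linarith [div_le_self hμ.le hm1]) ?_ ?_
  · exact CharZero.eq_neg_self_iff.1 (by simpa using h)
  · simpa using hshift c (-μ) (μ - c) k hk
  · have hk' : (c - 2 * μ) * π * m / μ = π + ((k - m : ℤ) : ℝ) * (2 * π) := by
      rw [sub_mul, sub_mul, sub_div, hk]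
      field_simp
      push_cast
      ring
    have := hshift (c - 2 * μ) (μ - c) μ (k - m) hk'
    rwa [show μ - c + (c - 2 * μ) = -μ by ring, show μ + (c - 2 * μ) = -μ + c by ring] at this

end WormDomain

end

open WormDomain in
theorem Hfun_orthogonal_systems_general (μ c₀ : ℝ) (hμ : 0 < μ)
    (k k' : ℕ) (j j' : ℤ) (h : (k, j) ≠ (k', j')) :
    (∫ z in wormT μ, Hfun μ c₀ (2 * k) j z * (starRingEnd ℂ) (Hfun μ c₀ (2 * k') j' z) = 0) ∧
    (∫ z in wormT μ,
        Hfun μ c₀ (2 * k + 1) j z * (starRingEnd ℂ) (Hfun μ c₀ (2 * k' + 1) j' z) = 0) := by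
  rcases eq_or_ne j j' with rfl | hj
  · have hm : (k : ℤ) - k' ≠ 0 := sub_ne_zero.2 fun hk => h (by rw [Nat.cast_inj.1 hk])
    exact ⟨integral_Hfun_mul_conj_eq_zero_of_sub_eq hμ c₀ j hm (by push_cast; ring),
      integral_Hfun_mul_conj_eq_zero_of_sub_eq hμ c₀ j hm (by push_cast; ring)⟩
  · exact ⟨integral_Hfun_mul_conj_eq_zero_of_ne μ c₀ _ _ hj,
      integral_Hfun_mul_conj_eq_zero_of_ne μ c₀ _ _ hj⟩

theorem Hfun_orthogonal_systems (μ c₀ : ℝ) (hμ : 0 < μ) (hc₀ : -1 < c₀)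
    (k k' : ℕ) (j j' : ℤ) (h : (k, j) ≠ (k', j')) :
    (∫ z in wormT μ, Hfun μ c₀ (2 * k) j z * (starRingEnd ℂ) (Hfun μ c₀ (2 * k') j' z) = 0) ∧
    (∫ z in wormT μ,
        Hfun μ c₀ (2 * k + 1) j z * (starRingEnd ℂ) (Hfun μ c₀ (2 * k' + 1) j' z) = 0) :=
  Hfun_orthogonal_systems_general μ c₀ hμ k k' j j' h
end

section
/- Let λ ∈ ℂ with Re λ > -1. Then for every ξ > 0, (1/2π) ∫_{−∞}^{+∞} (u+i)^{−(λ+2)} e^{−iξu} du = ξ^{λ+1} e^{−ξ} / (i^{λ+2} Γ(λ+2)), and for every ξ < 0 the integral (1/2π) ∫_{−∞}^{+∞} (u+i)^{−(λ+2)} e^{−iξu} du equals 0. Here the integral is over u ∈ ℝ and is absolutely convergent. -/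
/-!
The Laplace integral `∫₀^∞ t ^ (s - 1) e ^ (-z t) dt` equals `Γ(s) z ^ (-s)` for real `z > 0` by the
Gamma integral, hence on the whole half-plane `Re z > 0` by analytic continuation. Taking
`z = 1 + 2πiu`, the Fourier transform of `g(t) = t ^ (s - 1) e ^ (-t) 𝟙_{t > 0}` is
`Γ(s) (1 + 2πiu) ^ (-s) = Γ(s) i ^ s (i - 2πu) ^ (-s)`, which is integrable when `Re s > 1`
(here `s = λ + 2`). Fourier inversion at the continuity points `ξ ≠ 0` of `g` then expresses
`g(ξ)` through the integral of the statement.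
-/

open MeasureTheory Real Set Filter Complex
open scoped Topology FourierTransform

lemma norm_ofReal_cpow_mul_cexp_neg_mul {t : ℝ} (ht : 0 < t) (w z : ℂ) :
    ‖(t : ℂ) ^ w * cexp (-z * t)‖ = t ^ w.re * rexp (-z.re * t) := by
  simp [norm_cpow_eq_rpow_re_of_pos ht, Complex.norm_exp]

lemma integrableOn_ofReal_cpow_mul_cexp_neg_mul {w z : ℂ} (hw : -1 < w.re) (hz : 0 < z.re) :
    IntegrableOn (fun t : ℝ => (t : ℂ) ^ w * cexp (-z * t)) (Ioi 0) := by
  have hbound : IntegrableOn (fun t : ℝ => t ^ w.re * rexp (-z.re * t)) (Ioi 0) := by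
    simpa using integrableOn_rpow_mul_exp_neg_mul_rpow hw one_pos hz
  refine Integrable.mono' hbound ?_ ((ae_restrict_iff' measurableSet_Ioi).mpr (.of_forall ?_))
  · exact (ContinuousOn.mul (fun t ht => (continuousAt_ofReal_cpow_const t w
      (.inr (ne_of_gt ht))).continuousWithinAt) (by fun_prop)).aestronglyMeasurable
      measurableSet_Ioi
  · intro t ht
    rw [norm_ofReal_cpow_mul_cexp_neg_mul ht]

lemma differentiableAt_integral_ofReal_cpow_mul_cexp_neg_mul {s z₀ : ℂ} (hs : 0 < s.re)
    (hz₀ : 0 < z₀.re) :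
    DifferentiableAt ℂ (fun z => ∫ t in Ioi (0 : ℝ), (t : ℂ) ^ (s - 1) * cexp (-z * t)) z₀ := by
  have hs' : -1 < (s - 1).re := by simp; linarith
  have hre : ∀ z ∈ Metric.ball z₀ (z₀.re / 2), z₀.re / 2 < z.re := fun z hz => by
    have := (abs_re_le_norm (z - z₀)).trans_lt (mem_ball_iff_norm.mp hz)
    rw [sub_re, abs_lt] at this
    linarith
  have hbound : IntegrableOn (fun t : ℝ => t ^ s.re * rexp (-(z₀.re / 2) * t)) (Ioi 0) := by
    simpa using integrableOn_rpow_mul_exp_neg_mul_rpow (by linarith) one_pos (half_pos hz₀)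
  refine (hasDerivAt_integral_of_dominated_loc_of_deriv_le (μ := volume.restrict (Ioi 0))
    (F := fun z (t : ℝ) => (t : ℂ) ^ (s - 1) * cexp (-z * t))
    (F' := fun z (t : ℝ) => (t : ℂ) ^ (s - 1) * cexp (-z * t) * -t)
    (Metric.ball_mem_nhds z₀ (half_pos hz₀)) ?_
    (integrableOn_ofReal_cpow_mul_cexp_neg_mul hs' hz₀) ?_ ?_ hbound ?_).2.differentiableAt
  · filter_upwards [Metric.ball_mem_nhds z₀ (half_pos hz₀)] with z hz
    exact (integrableOn_ofReal_cpow_mul_cexp_neg_mul hs' (by linarith [hre z hz])).1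
  · exact (integrableOn_ofReal_cpow_mul_cexp_neg_mul hs' hz₀).1.mul
      (by fun_prop : Continuous fun t : ℝ => -(t : ℂ)).aestronglyMeasurable
  · refine (ae_restrict_iff' measurableSet_Ioi).mpr (.of_forall fun t ht z hz => ?_)
    rw [norm_mul, norm_ofReal_cpow_mul_cexp_neg_mul ht, norm_neg, norm_real,
      Real.norm_of_nonneg ht.le, mul_right_comm, ← Real.rpow_add_one ht.ne', sub_re, one_re,
      sub_add_cancel]
    have := hre z hz
    gcongr
    exacts [(Real.rpow_pos_of_pos ht _).le, le_of_lt ht]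
  · refine (ae_restrict_iff' measurableSet_Ioi).mpr (.of_forall fun t ht z hz => ?_)
    exact (((hasDerivAt_neg z).mul_const (t : ℂ)).cexp.const_mul _).congr_deriv (by ring)

lemma integral_ofReal_cpow_mul_cexp_neg_mul_Ioi {s z : ℂ} (hs : 0 < s.re) (hz : 0 < z.re) :
    ∫ t in Ioi (0 : ℝ), (t : ℂ) ^ (s - 1) * cexp (-z * t) = Gamma s * z ^ (-s) := by
  let U : Set ℂ := {z | 0 < z.re}
  have hU : IsOpen U := isOpen_lt continuous_const continuous_re
  have hf : AnalyticOnNhd ℂ (fun z => ∫ t in Ioi (0 : ℝ), (t : ℂ) ^ (s - 1) * cexp (-z * t)) U :=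
    DifferentiableOn.analyticOnNhd (fun z hz =>
      (differentiableAt_integral_ofReal_cpow_mul_cexp_neg_mul hs hz).differentiableWithinAt) hU
  have hg : AnalyticOnNhd ℂ (fun z => Gamma s * z ^ (-s)) U :=
    DifferentiableOn.analyticOnNhd (fun z hz =>
      ((differentiableAt_id.cpow_const (.inl hz)).const_mul _).differentiableWithinAt) hU
  have hreal : ∀ r : ℝ, 0 < r →
      ∫ t in Ioi (0 : ℝ), (t : ℂ) ^ (s - 1) * cexp (-r * t) = Gamma s * (r : ℂ) ^ (-s) := by
    intro r hr
    have harg : (r : ℂ).arg ≠ π := by simp [arg_ofReal_of_nonneg hr.le, pi_ne_zero.symm]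
    simp_rw [neg_mul]
    rw [integral_cpow_mul_exp_neg_mul_Ioi hs hr, one_div, inv_cpow _ _ harg,
      ← cpow_neg, mul_comm]
  refine hf.eqOn_of_preconnected_of_frequently_eq hg (convex_halfSpace_re_gt 0).isPreconnected
    (z₀ := 1) (by simp [U]) ?_ hz
  have h_real : ∃ᶠ r : ℝ in 𝓝[≠] 1, ∫ t in Ioi (0 : ℝ), (t : ℂ) ^ (s - 1) * cexp (-r * t) =
      Gamma s * (r : ℂ) ^ (-s) :=
    ((eventually_gt_nhds one_pos).filter_mono nhdsWithin_le_nhds).frequently.mono hreal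
  rw [frequently_iff_seq_forall] at h_real ⊢
  obtain ⟨rs, hrs, hrs_eq⟩ := h_real
  refine ⟨fun n => rs n, ?_, hrs_eq⟩
  rw [tendsto_nhdsWithin_iff] at hrs ⊢
  exact ⟨tendsto_ofReal_iff.mpr hrs.1, by simpa using hrs.2⟩

lemma mul_cpow_of_arg_add_mem_Ioc {a b : ℂ} (ha : a ≠ 0) (hb : b ≠ 0)
    (h : a.arg + b.arg ∈ Ioc (-π) π) (c : ℂ) : (a * b) ^ c = a ^ c * b ^ c := by
  rw [cpow_def_of_ne_zero (mul_ne_zero ha hb), log_mul ha hb h, add_mul, Complex.exp_add,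
    ← cpow_def_of_ne_zero ha, ← cpow_def_of_ne_zero hb]

lemma I_mul_cpow {w : ℂ} (hw : 0 < w.re) (c : ℂ) : (I * w) ^ c = I ^ c * w ^ c := by
  have hw' := abs_lt.mp (abs_arg_lt_pi_div_two_iff.mpr (.inl hw))
  refine mul_cpow_of_arg_add_mem_Ioc I_ne_zero (fun h => by simp [h] at hw) ?_ c
  rw [arg_I]
  constructor <;> linarith [pi_pos]

noncomputable def oneSidedGamma (s : ℂ) : ℝ → ℂ :=
  (Ioi 0).indicator fun t => (t : ℂ) ^ (s - 1) * cexp (-t)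

variable {s : ℂ}

lemma integrable_oneSidedGamma (hs : 0 < s.re) : Integrable (oneSidedGamma s) :=
  (integrable_indicator_iff measurableSet_Ioi).mpr <| by
    simpa using integrableOn_ofReal_cpow_mul_cexp_neg_mul (z := 1) (by simp; linarith) one_pos

lemma continuousAt_oneSidedGamma {ξ : ℝ} (hξ : ξ ≠ 0) : ContinuousAt (oneSidedGamma s) ξ := by
  rcases hξ.lt_or_gt with hξ | hξ
  · refine (continuousAt_const (y := (0 : ℂ))).congr ?_
    filter_upwards [Iio_mem_nhds hξ] with t ht
    exact (indicator_of_notMem (not_lt.mpr ht.le) _).symm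
  · refine ((continuousAt_ofReal_cpow_const _ (s - 1) (.inr hξ.ne')).mul
      (by fun_prop : ContinuousAt (fun t : ℝ => cexp (-t)) ξ)).congr ?_
    filter_upwards [Ioi_mem_nhds hξ] with t ht
    exact (indicator_of_mem ht _).symm

lemma fourier_oneSidedGamma (hs : 0 < s.re) (u : ℝ) :
    𝓕 (oneSidedGamma s) u = Gamma s * I ^ s * ((-2 * π * u : ℝ) + I) ^ (-s) := by
  set w : ℂ := 1 + (2 * π * u : ℝ) * I
  have hw : 0 < w.re := by simp [w]
  have hIw : ((-2 * π * u : ℝ) + I : ℂ) = I * w := by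
    simp only [w]
    push_cast
    linear_combination (-(2 * π * u) : ℂ) * I_mul_I
  have hintegrand : (fun v : ℝ => cexp ((-2 * π * v * u : ℝ) * I) • oneSidedGamma s v) =
      (Ioi 0).indicator fun t : ℝ => (t : ℂ) ^ (s - 1) * cexp (-w * t) := by
    ext v
    by_cases hv : v ∈ Ioi 0
    · simp only [oneSidedGamma, indicator_of_mem hv, smul_eq_mul, w]
      rw [mul_left_comm, ← Complex.exp_add]
      congr 2
      push_cast
      ring
    · simp [oneSidedGamma, indicator_of_notMem hv]
  rw [Real.fourier_real_eq_integral_exp_smul, hintegrand, integral_indicator measurableSet_Ioi,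
    integral_ofReal_cpow_mul_cexp_neg_mul_Ioi hs hw, hIw, I_mul_cpow hw, cpow_neg I,
    mul_assoc, mul_inv_cancel_left₀ (cpow_ne_zero_iff.mpr (.inl I_ne_zero))]

lemma norm_cpow_le_rpow_mul_exp (z w : ℂ) : ‖z ^ w‖ ≤ ‖z‖ ^ w.re * rexp (π * |w.im|) :=
  calc ‖z ^ w‖ ≤ ‖z‖ ^ w.re / rexp (arg z * w.im) := norm_cpow_le z w
    _ = ‖z‖ ^ w.re * rexp (-(arg z * w.im)) := by rw [Real.exp_neg, div_eq_mul_inv]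
    _ ≤ ‖z‖ ^ w.re * rexp (π * |w.im|) := by
      gcongr
      calc -(arg z * w.im) ≤ |arg z| * |w.im| := by rw [← abs_mul]; exact neg_le_abs _
        _ ≤ π * |w.im| := by gcongr; exact abs_arg_le_pi z

lemma integrable_ofReal_add_I_cpow_neg (hs : 1 < s.re) :
    Integrable fun v : ℝ => ((v : ℂ) + I) ^ (-s) := by
  refine ((integrable_rpow_neg_one_add_norm_sq (r := s.re) (by simpa)).const_mul
    (rexp (π * |s.im|))).mono' ?_ (.of_forall fun v => ?_)
  · refine (Continuous.cpow (by fun_prop) continuous_const fun v => ?_).aestronglyMeasurable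
    exact .inr (by simp)
  · have hnorm : ‖(v : ℂ) + I‖ ^ (-s.re) = (1 + v ^ 2) ^ (-s.re / 2) := by
      rw [show (v : ℂ) + I = v + (1 : ℝ) * I by simp, norm_add_mul_I, Real.sqrt_eq_rpow,
        ← Real.rpow_mul (by positivity), add_comm, one_pow]
      ring_nf
    rw [mul_comm]
    simpa [hnorm] using norm_cpow_le_rpow_mul_exp ((v : ℂ) + I) (-s)

lemma integral_ofReal_add_I_cpow_neg_mul_cexp (hs : 1 < s.re) {ξ : ℝ} (hξ : ξ ≠ 0) :
    1 / (2 * (π : ℂ)) * ∫ v : ℝ, ((v : ℂ) + I) ^ (-s) * cexp (-I * ξ * v) =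
      oneSidedGamma s ξ / (I ^ s * Gamma s) := by
  have hs₀ : 0 < s.re := by linarith
  set h : ℝ → ℂ := fun v => ((v : ℂ) + I) ^ (-s) * cexp (-I * ξ * v)
  have hF : 𝓕 (oneSidedGamma s) = fun u => Gamma s * I ^ s * ((-2 * π * u : ℝ) + I) ^ (-s) :=
    funext (fourier_oneSidedGamma hs₀)
  have hF_int : Integrable (𝓕 (oneSidedGamma s)) := by
    rw [hF]
    exact (((integrable_ofReal_add_I_cpow_neg hs).comp_mul_left' (by positivity : -2 * π ≠ 0))
      ).const_mul _
  have hinv := (integrable_oneSidedGamma hs₀).fourierInv_fourier_eq hF_int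
    (continuousAt_oneSidedGamma hξ)
  have hintegrand : ∀ u : ℝ, cexp ((-2 * π * u * -ξ : ℝ) * I) •
      (Gamma s * I ^ s * ((-2 * π * u : ℝ) + I) ^ (-s)) = Gamma s * I ^ s * h (-2 * π * u) := by
    intro u
    simp only [h, smul_eq_mul]
    rw [mul_comm, mul_assoc]
    congr 3
    push_cast
    ring
  rw [Real.fourierInv_eq_fourier_neg, Real.fourier_real_eq_integral_exp_smul, hF] at hinv
  simp only [hintegrand, integral_const_mul, Measure.integral_comp_mul_left h] at hinv
  rw [← hinv, abs_inv, abs_of_neg (by linarith [pi_pos]), Complex.real_smul]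
  have hΓ := Gamma_ne_zero_of_re_pos hs₀
  have hIs : I ^ s ≠ 0 := cpow_ne_zero_iff.mpr (.inl I_ne_zero)
  have hπ : (π : ℂ) ≠ 0 := ofReal_ne_zero.mpr pi_ne_zero
  push_cast
  field_simp

/-- The Fourier transform of `(u+i)^{-(λ+2)}`: it is `ξ^{λ+1} e^{-ξ} / (i^{λ+2} Γ(λ+2))`
for `ξ > 0` and vanishes for `ξ < 0`. -/
theorem fourier_transform_cpow (l : ℂ) (hl : -1 < l.re) :
    (∀ ξ : ℝ, MeasureTheory.Integrable
        (fun u : ℝ => ((u : ℂ) + Complex.I) ^ (-(l + 2)) *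
          Complex.exp (-Complex.I * (ξ : ℂ) * (u : ℂ)))) ∧
    (∀ ξ : ℝ, 0 < ξ →
      (1 / (2 * (π : ℂ))) *
          ∫ u : ℝ, ((u : ℂ) + Complex.I) ^ (-(l + 2)) *
            Complex.exp (-Complex.I * (ξ : ℂ) * (u : ℂ)) =
        (ξ : ℂ) ^ (l + 1) * Complex.exp (-(ξ : ℂ)) /
          (Complex.I ^ (l + 2) * Complex.Gamma (l + 2))) ∧
    (∀ ξ : ℝ, ξ < 0 →
      (1 / (2 * (π : ℂ))) *
          ∫ u : ℝ, ((u : ℂ) + Complex.I) ^ (-(l + 2)) *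
            Complex.exp (-Complex.I * (ξ : ℂ) * (u : ℂ)) = 0) := by
  have hs : 1 < (l + 2).re := by simp; linarith
  refine ⟨fun ξ => ?_, fun ξ hξ => ?_, fun ξ hξ => ?_⟩
  · exact (integrable_ofReal_add_I_cpow_neg hs).mul_bdd (by fun_prop)
      (.of_forall fun u => (by simp [Complex.norm_exp] : ‖cexp (-I * ξ * u)‖ ≤ 1))
  · rw [integral_ofReal_add_I_cpow_neg_mul_cexp hs hξ.ne', oneSidedGamma,
      indicator_of_mem (mem_Ioi.mpr hξ)]
    ring_nf
  · rw [integral_ofReal_add_I_cpow_neg_mul_cexp hs hξ.ne, oneSidedGamma,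
      indicator_of_notMem (notMem_Ioi.mpr hξ.le), zero_div]
end
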